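/- Let k ≥ 1 and let a_1 < a_2 < … < a_k be positive integers, A = {a_1,…,a_k}. For each 1 ≤ i ≤ k, in ℤ[[x,y,r,ℓ,d]] one has C_A(a_i | x;y;r,ℓ,d) = x^{a_i}·y · ( 1 + d·∑_{j=1}^{i−1} C_A(a_j | x;y;r,ℓ,d) + ℓ·C_A(a_i | x;y;r,ℓ,d) + r·∑_{j=i+1}^{k} C_A(a_j | x;y;r,ℓ,d) ). -/

import Mathlib

open scoped Classical

/-- Number of rises of a list (adjacent pairs with strict increase). -/
def risesL (l : List ℕ) : ℕ := (l.zip l.tail).countP (fun p => decide (p.1 < p.2))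

/-- Number of levels of a list (adjacent equal pairs). -/
def levelsL (l : List ℕ) : ℕ := (l.zip l.tail).countP (fun p => decide (p.1 = p.2))

/-- Number of drops of a list (adjacent pairs with strict decrease). -/
def dropsL (l : List ℕ) : ℕ := (l.zip l.tail).countP (fun p => decide (p.2 < p.1))

/-- The generating function `C_A(s | x;y;r,ℓ,d)` in `ℤ[[x,y,r,ℓ,d]]`, with
`x = X 0`, `y = X 1`, `r = X 2`, `ℓ = X 3`, `d = X 4`: the coefficient of
`x^n y^p r^s ℓ^t d^u` is the number of compositions of `n` with all parts in
`A = {a 1, …, a k}`, starting with the part `s`, with `p` parts, `s` rises,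
`t` levels and `u` drops. -/
noncomputable def CAs {k : ℕ} (a : Fin k → ℕ) (s : ℕ) : MvPowerSeries (Fin 5) ℤ :=
  fun m => ((Finset.univ.filter (fun c : Composition (m 0) =>
      (∀ p ∈ c.blocks, ∃ i, a i = p) ∧ c.blocks.head? = some s ∧ c.length = m 1 ∧
      risesL c.blocks = m 2 ∧ levelsL c.blocks = m 3 ∧ dropsL c.blocks = m 4)).card : ℤ)

noncomputable def FS {k : ℕ} (a : Fin k → ℕ) (s n p ri le dr : ℕ) : Finset (Composition n) :=
  Finset.univ.filter (fun c : Composition n =>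
      (∀ p ∈ c.blocks, ∃ i, a i = p) ∧ c.blocks.head? = some s ∧ c.length = p ∧
      risesL c.blocks = ri ∧ levelsL c.blocks = le ∧ dropsL c.blocks = dr)

theorem risesL_cons (x y : ℕ) (l : List ℕ) (h : l.head? = some y) :
    risesL (x :: l) = risesL l + (if x < y then 1 else 0) := by
  cases l with
  | nil => simp at h
  | cons z t => simp at h; subst h; simp [risesL, List.countP_cons]

theorem levelsL_cons (x y : ℕ) (l : List ℕ) (h : l.head? = some y) :
    levelsL (x :: l) = levelsL l + (if x = y then 1 else 0) := by
  cases l with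
  | nil => simp at h
  | cons z t => simp at h; subst h; simp [levelsL, List.countP_cons]

theorem dropsL_cons (x y : ℕ) (l : List ℕ) (h : l.head? = some y) :
    dropsL (x :: l) = dropsL l + (if y < x then 1 else 0) := by
  cases l with
  | nil => simp at h
  | cons z t => simp at h; subst h; simp [dropsL, List.countP_cons]

theorem head?_decomp {α} {l : List α} {v : α} (h : l.head? = some v) : l = v :: l.tail := by
  cases l <;> simp_all

theorem cons_bij {k : ℕ} (a : Fin k → ℕ) (v w : ℕ) (hva : ∃ j, a j = v) (hv0 : 0 < v)
    (n' p' ri' le' dr' : ℕ) :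
    ((FS a v (v + n') (p' + 1) (ri' + if v < w then 1 else 0) (le' + if v = w then 1 else 0)
        (dr' + if w < v then 1 else 0)).filter
      (fun c => c.blocks.tail.head? = some w)).card = (FS a w n' p' ri' le' dr').card := by
  refine Finset.card_bij'
    (fun c hc => ⟨c.blocks.tail, fun hi => c.blocks_pos (List.mem_of_mem_tail hi), ?_⟩)
    (fun c hc => ⟨v :: c.blocks, ?_, ?_⟩) ?_ ?_ ?_ ?_
  · -- tail sums to n'
    simp only [FS, Finset.mem_filter, Finset.mem_univ, true_and] at hc
    obtain ⟨⟨-, hhead, -⟩, -⟩ := hc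
    have := c.blocks_sum
    rw [head?_decomp hhead] at this
    simpa using this
  · -- positivity of v :: blocks
    intro i hi
    rcases List.mem_cons.1 hi with rfl | hi
    · exact hv0
    · exact c.blocks_pos hi
  · -- sum of v :: blocks
    simp only [FS, Finset.mem_filter] at hc
    simp [c.blocks_sum]
  · -- forward membership
    intro c hc
    simp only [FS, Finset.mem_filter, Finset.mem_univ, true_and] at hc ⊢
    obtain ⟨⟨hA, hhead, hlen, hri, hle, hdr⟩, hw⟩ := hc
    have hd : c.blocks = v :: c.blocks.tail := head?_decomp hhead
    refine ⟨fun q hq => hA q (List.mem_of_mem_tail hq), hw, ?_, ?_, ?_, ?_⟩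
    · have : c.length = c.blocks.length := rfl
      rw [this, hd] at hlen
      simpa [Composition.length] using hlen
    · rw [hd, risesL_cons v w _ hw] at hri; omega
    · rw [hd, levelsL_cons v w _ hw] at hle; omega
    · rw [hd, dropsL_cons v w _ hw] at hdr; omega
  · -- backward membership
    intro c hc
    simp only [FS, Finset.mem_filter, Finset.mem_univ, true_and] at hc ⊢
    obtain ⟨hA, hhead, hlen, hri, hle, hdr⟩ := hc
    refine ⟨⟨?_, rfl, ?_, ?_, ?_, ?_⟩, ?_⟩
    · intro q hq
      rcases List.mem_cons.1 hq with rfl | hq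
      · exact hva
      · exact hA q hq
    · simp only [Composition.length] at hlen ⊢
      simp [hlen]
    · rw [risesL_cons v w _ hhead, hri]
    · rw [levelsL_cons v w _ hhead, hle]
    · rw [dropsL_cons v w _ hhead, hdr]
    · simpa using hhead
  · -- left inverse
    intro c hc
    simp only [FS, Finset.mem_filter, Finset.mem_univ, true_and] at hc
    obtain ⟨⟨-, hhead, -⟩, -⟩ := hc
    exact Composition.ext (head?_decomp hhead).symm
  · -- right inverse
    intro c hc
    exact Composition.ext rfl

theorem cf_card {k : ℕ} (a : Fin k → ℕ) (v w : ℕ) (hva : ∃ j, a j = v) (hv0 : 0 < v)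
    (n p ri le dr : ℕ) :
    ((FS a v n p ri le dr).filter (fun c => c.blocks.tail.head? = some w)).card =
    if v ≤ n ∧ 1 ≤ p ∧ (if v < w then 1 else 0) ≤ ri ∧ (if v = w then 1 else 0) ≤ le ∧
        (if w < v then 1 else 0) ≤ dr
    then (FS a w (n - v) (p - 1) (ri - if v < w then 1 else 0) (le - if v = w then 1 else 0)
        (dr - if w < v then 1 else 0)).card
    else 0 := by
  by_cases h : v ≤ n ∧ 1 ≤ p ∧ (if v < w then 1 else 0) ≤ ri ∧ (if v = w then 1 else 0) ≤ le ∧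
      (if w < v then 1 else 0) ≤ dr
  · rw [if_pos h]
    obtain ⟨h1, h2, h3, h4, h5⟩ := h
    obtain ⟨n', rfl⟩ : ∃ n', n = v + n' := ⟨n - v, by omega⟩
    obtain ⟨p', rfl⟩ : ∃ p', p = p' + 1 := ⟨p - 1, by omega⟩
    obtain ⟨ri', rfl⟩ : ∃ x, ri = x + if v < w then 1 else 0 := ⟨ri - (if v < w then 1 else 0), by omega⟩
    obtain ⟨le', rfl⟩ : ∃ x, le = x + if v = w then 1 else 0 := ⟨le - (if v = w then 1 else 0), by omega⟩
    obtain ⟨dr', rfl⟩ : ∃ x, dr = x + if w < v then 1 else 0 := ⟨dr - (if w < v then 1 else 0), by omega⟩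
    have e1 : v + n' - v = n' := by omega
    rw [e1]
    simpa using cons_bij a v w hva hv0 n' p' ri' le' dr'
  · rw [if_neg h, Finset.card_eq_zero, Finset.eq_empty_iff_forall_notMem]
    intro c hc
    simp only [FS, Finset.mem_filter, Finset.mem_univ, true_and] at hc
    obtain ⟨⟨hA, hhead, hlen, hri, hle, hdr⟩, hw⟩ := hc
    have hd : c.blocks = v :: c.blocks.tail := head?_decomp hhead
    have hsum := c.blocks_sum
    rw [hd, List.sum_cons] at hsum
    have h1 : v ≤ n := by omega
    have h2 : 1 ≤ p := by
      have : c.length = c.blocks.length := rfl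
      rw [this, hd] at hlen
      simp at hlen; omega
    have h3 : (if v < w then 1 else 0) ≤ ri := by
      rw [hd, risesL_cons v w _ hw] at hri; omega
    have h4 : (if v = w then 1 else 0) ≤ le := by
      rw [hd, levelsL_cons v w _ hw] at hle; omega
    have h5 : (if w < v then 1 else 0) ≤ dr := by
      rw [hd, dropsL_cons v w _ hw] at hdr; omega
    exact h ⟨h1, h2, h3, h4, h5⟩

theorem sum_split {k : ℕ} (i : Fin k) (f : Fin k → ℕ) :
    ∑ j, f j = (∑ j ∈ Finset.univ.filter (· < i), f j) + f i
      + ∑ j ∈ Finset.univ.filter (i < ·), f j := by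
  classical
  rw [← Finset.sum_filter_add_sum_filter_not Finset.univ (· < i) f, add_assoc]
  congr 1
  have : Finset.univ.filter (fun j => ¬ j < i) = insert i (Finset.univ.filter (i < ·)) := by
    ext j
    simp only [Finset.mem_filter, Finset.mem_univ, true_and, Finset.mem_insert, not_lt]
    constructor
    · intro h
      rcases eq_or_lt_of_le h with h | h
      · exact Or.inl h.symm
      · exact Or.inr h
    · rintro (rfl | h)
      · exact le_refl _
      · exact h.le
  rw [this, Finset.sum_insert (by simp)]

theorem single_card {k : ℕ} (a : Fin k → ℕ) (s n p ri le dr : ℕ) (hs : ∃ j, a j = s)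
    (hs0 : 0 < s) :
    ((FS a s n p ri le dr).filter (fun c => c.blocks.tail = [])).card =
    if n = s ∧ p = 1 ∧ ri = 0 ∧ le = 0 ∧ dr = 0 then 1 else 0 := by
  by_cases h : n = s ∧ p = 1 ∧ ri = 0 ∧ le = 0 ∧ dr = 0
  · rw [if_pos h]
    obtain ⟨h1, h2, h3, h4, h5⟩ := h
    rw [Finset.card_eq_one]
    refine ⟨⟨[s], by rintro i hi; simp at hi; omega, by simp [h1]⟩, ?_⟩
    ext c
    simp only [Finset.mem_filter, FS, Finset.mem_univ, true_and, Finset.mem_singleton]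
    constructor
    · rintro ⟨⟨-, hhead, -⟩, htail⟩
      apply Composition.ext
      rw [head?_decomp hhead, htail]
    · rintro rfl
      exact ⟨⟨fun q hq => by simp at hq; exact hq ▸ hs, rfl, by simp [Composition.length, h2],
        by simp [risesL, h3], by simp [levelsL, h4], by simp [dropsL, h5]⟩, rfl⟩
  · rw [if_neg h, Finset.card_eq_zero, Finset.eq_empty_iff_forall_notMem]
    intro c hc
    simp only [Finset.mem_filter, FS, Finset.mem_univ, true_and] at hc
    obtain ⟨⟨hA, hhead, hlen, hri, hle, hdr⟩, htail⟩ := hc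
    have hd : c.blocks = [s] := by rw [head?_decomp hhead, htail]
    have hsum := c.blocks_sum
    rw [hd] at hsum
    have hlen' : c.length = 1 := by simp [Composition.length, hd]
    rw [hd] at hri hle hdr
    exact h ⟨by simpa using hsum.symm, by omega, by simpa [risesL] using hri.symm,
      by simpa [levelsL] using hle.symm, by simpa [dropsL] using hdr.symm⟩

theorem partition_card {k : ℕ} (a : Fin k → ℕ) (hinj : Function.Injective a)
    (s n p ri le dr : ℕ) :
    (FS a s n p ri le dr).card =
      ((FS a s n p ri le dr).filter (fun c => c.blocks.tail = [])).card +
      ∑ j : Fin k, ((FS a s n p ri le dr).filter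
        (fun c => c.blocks.tail.head? = some (a j))).card := by
  classical
  rw [← Finset.card_filter_add_card_filter_not
    (p := fun c : Composition n => c.blocks.tail = [])]
  congr 1
  have hset : (FS a s n p ri le dr).filter (fun c => ¬ c.blocks.tail = [])
      = Finset.univ.biUnion (fun j : Fin k => (FS a s n p ri le dr).filter
        (fun c => c.blocks.tail.head? = some (a j))) := by
    ext c
    simp only [Finset.mem_filter, Finset.mem_biUnion, Finset.mem_univ, true_and]
    constructor
    · rintro ⟨hc, htail⟩
      cases ht : c.blocks.tail with
      | nil => exact absurd ht htail
      | cons y t =>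
        have hy : y ∈ c.blocks := List.mem_of_mem_tail (by rw [ht]; exact List.mem_cons_self)
        have hc' := hc
        simp only [FS, Finset.mem_filter, Finset.mem_univ, true_and] at hc'
        obtain ⟨j, hj⟩ := hc'.1 y hy
        exact ⟨j, hc, by simp [ht, hj]⟩
    · rintro ⟨j, hc, hj⟩
      refine ⟨hc, ?_⟩
      intro ht
      rw [ht] at hj
      simp at hj
  rw [hset, Finset.card_biUnion]
  intro j _ j' _ hjj'
  simp only [Finset.disjoint_left, Finset.mem_filter]
  rintro c ⟨-, h1⟩ ⟨-, h2⟩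
  rw [h1] at h2
  exact hjj' (hinj (by simpa using h2))

theorem sum_ite_const {β : Type*} (s : Finset β) (P : Prop) [Decidable P] (f : β → ℕ) :
    (∑ j ∈ s, if P then f j else 0) = if P then ∑ j ∈ s, f j else 0 := by
  split_ifs <;> simp

theorem count_main {k : ℕ} (a : Fin k → ℕ) (hpos : ∀ i, 0 < a i) (hmono : StrictMono a)
    (i : Fin k) (n p ri le dr : ℕ) :
    (FS a (a i) n p ri le dr).card =
      (if n = a i ∧ p = 1 ∧ ri = 0 ∧ le = 0 ∧ dr = 0 then 1 else 0)
      + (if a i ≤ n ∧ 1 ≤ p ∧ 1 ≤ dr then ∑ j ∈ Finset.univ.filter (· < i),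
          (FS a (a j) (n - a i) (p - 1) ri le (dr - 1)).card else 0)
      + (if a i ≤ n ∧ 1 ≤ p ∧ 1 ≤ le then
          (FS a (a i) (n - a i) (p - 1) ri (le - 1) dr).card else 0)
      + (if a i ≤ n ∧ 1 ≤ p ∧ 1 ≤ ri then ∑ j ∈ Finset.univ.filter (i < ·),
          (FS a (a j) (n - a i) (p - 1) (ri - 1) le dr).card else 0) := by
  rw [partition_card a hmono.injective, single_card a _ _ _ _ _ _ ⟨i, rfl⟩ (hpos i),
    sum_split i]
  have hlt : ∀ j ∈ Finset.univ.filter (· < i),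
      ((FS a (a i) n p ri le dr).filter (fun c => c.blocks.tail.head? = some (a j))).card
      = if a i ≤ n ∧ 1 ≤ p ∧ 1 ≤ dr then
          (FS a (a j) (n - a i) (p - 1) ri le (dr - 1)).card else 0 := by
    intro j hj
    have h1 : a j < a i := hmono (by simpa using hj)
    rw [cf_card a (a i) (a j) ⟨i, rfl⟩ (hpos i)]
    simp [lt_asymm h1, h1.ne', h1, Nat.zero_le]
  have heq :
      ((FS a (a i) n p ri le dr).filter (fun c => c.blocks.tail.head? = some (a i))).card
      = if a i ≤ n ∧ 1 ≤ p ∧ 1 ≤ le then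
          (FS a (a i) (n - a i) (p - 1) ri (le - 1) dr).card else 0 := by
    rw [cf_card a (a i) (a i) ⟨i, rfl⟩ (hpos i)]
    simp [lt_irrefl, Nat.zero_le]
  have hgt : ∀ j ∈ Finset.univ.filter (i < ·),
      ((FS a (a i) n p ri le dr).filter (fun c => c.blocks.tail.head? = some (a j))).card
      = if a i ≤ n ∧ 1 ≤ p ∧ 1 ≤ ri then
          (FS a (a j) (n - a i) (p - 1) (ri - 1) le dr).card else 0 := by
    intro j hj
    have h1 : a i < a j := hmono (by simpa using hj)
    rw [cf_card a (a i) (a j) ⟨i, rfl⟩ (hpos i)]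
    simp [lt_asymm h1, h1.ne, h1, Nat.zero_le]
  rw [Finset.sum_congr rfl hlt, Finset.sum_congr rfl hgt, heq,
    sum_ite_const, sum_ite_const]
  ring

theorem stmt1 {k : ℕ} (hk : 1 ≤ k) (a : Fin k → ℕ) (hpos : ∀ i, 0 < a i)
    (hmono : StrictMono a) (i : Fin k) :
    CAs a (a i) = (MvPowerSeries.X 0) ^ (a i) * MvPowerSeries.X 1
      * (1 + MvPowerSeries.X 4 * (∑ j ∈ Finset.univ.filter (· < i), CAs a (a j))
          + MvPowerSeries.X 3 * CAs a (a i)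
          + MvPowerSeries.X 2 * (∑ j ∈ Finset.univ.filter (i < ·), CAs a (a j))) := by
  classical
  ext m
  set M : Fin 5 →₀ ℕ := Finsupp.single 0 (a i) + Finsupp.single 1 1 with hM
  have hmon : (MvPowerSeries.X (0 : Fin 5) : MvPowerSeries (Fin 5) ℤ) ^ (a i)
      * MvPowerSeries.X 1 = MvPowerSeries.monomial M 1 := by
    rw [MvPowerSeries.X_pow_eq, MvPowerSeries.X_def, MvPowerSeries.monomial_mul_monomial,
      one_mul]
  have hX : ∀ s : Fin 5, (MvPowerSeries.monomial M (1 : ℤ)) * MvPowerSeries.X s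
      = MvPowerSeries.monomial (M + Finsupp.single s 1) 1 := by
    intro s
    rw [MvPowerSeries.X_def, MvPowerSeries.monomial_mul_monomial, one_mul]
  rw [hmon, mul_add, mul_add, mul_add, mul_one, ← mul_assoc, ← mul_assoc, ← mul_assoc,
    hX 4, hX 3, hX 2]
  have hCA : ∀ (s : ℕ) (m' : Fin 5 →₀ ℕ), (MvPowerSeries.coeff m') (CAs a s)
      = ((FS a s (m' 0) (m' 1) (m' 2) (m' 3) (m' 4)).card : ℤ) := fun _ _ => rfl
  simp only [map_add, MvPowerSeries.coeff_monomial_mul, MvPowerSeries.coeff_monomial,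
    map_sum, one_mul, hCA]
  have hc1 : (m = M) ↔ (m 0 = a i ∧ m 1 = 1 ∧ m 2 = 0 ∧ m 3 = 0 ∧ m 4 = 0) := by
    constructor
    · rintro rfl
      refine ⟨?_, ?_, ?_, ?_, ?_⟩ <;> simp [hM, Finsupp.single_apply]
    · rintro ⟨h0, h1, h2, h3, h4⟩
      ext x
      fin_cases x <;> simp [hM, Finsupp.single_apply, h0, h1, h2, h3, h4]
  have hc4 : (M + Finsupp.single 4 1 ≤ m) ↔ (a i ≤ m 0 ∧ 1 ≤ m 1 ∧ 1 ≤ m 4) := by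
    rw [Finsupp.le_def]
    constructor
    · intro h
      exact ⟨by simpa [hM, Finsupp.single_apply] using h 0,
        by simpa [hM, Finsupp.single_apply] using h 1,
        by simpa [hM, Finsupp.single_apply] using h 4⟩
    · rintro ⟨h0, h1, h4⟩ x
      fin_cases x <;> simp [hM, Finsupp.single_apply, h0, h1, h4]
  have hc3 : (M + Finsupp.single 3 1 ≤ m) ↔ (a i ≤ m 0 ∧ 1 ≤ m 1 ∧ 1 ≤ m 3) := by
    rw [Finsupp.le_def]
    constructor
    · intro h
      exact ⟨by simpa [hM, Finsupp.single_apply] using h 0,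
        by simpa [hM, Finsupp.single_apply] using h 1,
        by simpa [hM, Finsupp.single_apply] using h 3⟩
    · rintro ⟨h0, h1, h3⟩ x
      fin_cases x <;> simp [hM, Finsupp.single_apply, h0, h1, h3]
  have hc2 : (M + Finsupp.single 2 1 ≤ m) ↔ (a i ≤ m 0 ∧ 1 ≤ m 1 ∧ 1 ≤ m 2) := by
    rw [Finsupp.le_def]
    constructor
    · intro h
      exact ⟨by simpa [hM, Finsupp.single_apply] using h 0,
        by simpa [hM, Finsupp.single_apply] using h 1,
        by simpa [hM, Finsupp.single_apply] using h 2⟩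
    · rintro ⟨h0, h1, h2⟩ x
      fin_cases x <;> simp [hM, Finsupp.single_apply, h0, h1, h2]
  have key : ∀ s : Fin 5, ∀ x : Fin 5, ((m - (M + Finsupp.single s 1) : Fin 5 →₀ ℕ)) x
      = m x - (M x + (Finsupp.single s 1 : Fin 5 →₀ ℕ) x) := by
    intro s x
    simp [Finsupp.tsub_apply]
  have e40 : ((m - (M + Finsupp.single 4 1) : Fin 5 →₀ ℕ)) 0 = m 0 - a i := by
    rw [key]; simp [hM, Finsupp.single_apply]
  have e41 : ((m - (M + Finsupp.single 4 1) : Fin 5 →₀ ℕ)) 1 = m 1 - 1 := by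
    rw [key]; simp [hM, Finsupp.single_apply]
  have e42 : ((m - (M + Finsupp.single 4 1) : Fin 5 →₀ ℕ)) 2 = m 2 := by
    rw [key]; simp [hM, Finsupp.single_apply]
  have e43 : ((m - (M + Finsupp.single 4 1) : Fin 5 →₀ ℕ)) 3 = m 3 := by
    rw [key]; simp [hM, Finsupp.single_apply]
  have e44 : ((m - (M + Finsupp.single 4 1) : Fin 5 →₀ ℕ)) 4 = m 4 - 1 := by
    rw [key]; simp [hM, Finsupp.single_apply]
  have e30 : ((m - (M + Finsupp.single 3 1) : Fin 5 →₀ ℕ)) 0 = m 0 - a i := by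
    rw [key]; simp [hM, Finsupp.single_apply]
  have e31 : ((m - (M + Finsupp.single 3 1) : Fin 5 →₀ ℕ)) 1 = m 1 - 1 := by
    rw [key]; simp [hM, Finsupp.single_apply]
  have e32 : ((m - (M + Finsupp.single 3 1) : Fin 5 →₀ ℕ)) 2 = m 2 := by
    rw [key]; simp [hM, Finsupp.single_apply]
  have e33 : ((m - (M + Finsupp.single 3 1) : Fin 5 →₀ ℕ)) 3 = m 3 - 1 := by
    rw [key]; simp [hM, Finsupp.single_apply]
  have e34 : ((m - (M + Finsupp.single 3 1) : Fin 5 →₀ ℕ)) 4 = m 4 := by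
    rw [key]; simp [hM, Finsupp.single_apply]
  have e20 : ((m - (M + Finsupp.single 2 1) : Fin 5 →₀ ℕ)) 0 = m 0 - a i := by
    rw [key]; simp [hM, Finsupp.single_apply]
  have e21 : ((m - (M + Finsupp.single 2 1) : Fin 5 →₀ ℕ)) 1 = m 1 - 1 := by
    rw [key]; simp [hM, Finsupp.single_apply]
  have e22 : ((m - (M + Finsupp.single 2 1) : Fin 5 →₀ ℕ)) 2 = m 2 - 1 := by
    rw [key]; simp [hM, Finsupp.single_apply]
  have e23 : ((m - (M + Finsupp.single 2 1) : Fin 5 →₀ ℕ)) 3 = m 3 := by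
    rw [key]; simp [hM, Finsupp.single_apply]
  have e24 : ((m - (M + Finsupp.single 2 1) : Fin 5 →₀ ℕ)) 4 = m 4 := by
    rw [key]; simp [hM, Finsupp.single_apply]
  rw [e40, e41, e42, e43, e44, e30, e31, e32, e33, e34, e20, e21, e22, e23, e24]
  rw [count_main a hpos hmono i]
  simp only [hc1, hc4, hc3, hc2]
  push_cast
  split_ifs <;> ring
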